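/- arXiv:0911.4704 — 5 statements merged into one kernel-verified Lean document; each statement's English description precedes it below -/
import Mathlib

section
/- Let X, S, Z be independent zero-mean Gaussian random variables with variances P, Q, N respectively (P,Q,N>0), Y = X+S+Z, α = P/(P+N), and U = X+αS. Then I(U;Y) − I(U;S) = ½·log₂(1+P/N). -/
open RealInnerProductSpace

/-- Gram matrix of a finite family of vectors (covariance matrix of zero-mean
jointly Gaussian random variables modeled as elements of an inner product space). -/
noncomputable def gramM {V : Type*} [NormedAddCommGroup V] [InnerProductSpace ℝ V] {n : ℕ}
    (v : Fin n → V) : Matrix (Fin n) (Fin n) ℝ := Matrix.of fun i j => ⟪v i, v j⟫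

/-- (Conditional) mutual information `I(x ; y | z)` of jointly Gaussian zero-mean random
variables, expressed by the standard Gaussian determinant formula (base-2 logarithm). -/
noncomputable def gMI {V : Type*} [NormedAddCommGroup V] [InnerProductSpace ℝ V] {a b c : ℕ}
    (x : Fin a → V) (y : Fin b → V) (z : Fin c → V) : ℝ :=
  (1/2) * Real.logb 2 (((gramM (Fin.append x z)).det * (gramM (Fin.append y z)).det) /
    ((gramM (Fin.append x (Fin.append y z))).det * (gramM z).det))

/-!
For single vectors, `I(u; y) = ½ log₂ (‖u‖²‖y‖² / det Gram(u, y))`, so the difference of the two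
mutual informations is `½ log₂` of `‖y‖² det Gram(u, s) / (‖s‖² det Gram(u, y))`. With
`α = P/(P+N)` both Gram determinants factor: `det Gram(U, S) = PQ` and
`det Gram(U, Y) = PN(P+Q+N)/(P+N)`, and the ratio collapses to `(P+N)/N`.
-/

open Real

section

variable {V : Type*} [NormedAddCommGroup V] [InnerProductSpace ℝ V]

lemma gMI_singleton_singleton_nil (u y : V) :
    gMI ![u] ![y] (![] : Fin 0 → V) =
      1 / 2 * logb 2 (⟪u, u⟫ * ⟪y, y⟫ / (⟪u, u⟫ * ⟪y, y⟫ - ⟪u, y⟫ ^ 2)) := by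
  simp [gMI, gramM, Matrix.det_fin_two, Fin.append, Fin.addCases, real_inner_comm y u, sq]

lemma inner_self_pos_of_gram_det_pos {u y : V} (h : 0 < ⟪u, u⟫ * ⟪y, y⟫ - ⟪u, y⟫ ^ 2) :
    0 < ⟪u, u⟫ ∧ 0 < ⟪y, y⟫ := by
  have hu := real_inner_self_nonneg (x := u)
  have hy := real_inner_self_nonneg (x := y)
  constructor <;> by_contra! h' <;> nlinarith [sq_nonneg ⟪u, y⟫]

lemma gMI_sub_gMI_singleton (u y s : V) (hy : 0 < ⟪u, u⟫ * ⟪y, y⟫ - ⟪u, y⟫ ^ 2)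
    (hs : 0 < ⟪u, u⟫ * ⟪s, s⟫ - ⟪u, s⟫ ^ 2) :
    gMI ![u] ![y] (![] : Fin 0 → V) - gMI ![u] ![s] (![] : Fin 0 → V) =
      1 / 2 * logb 2 (⟪y, y⟫ * (⟪u, u⟫ * ⟪s, s⟫ - ⟪u, s⟫ ^ 2) /
        (⟪s, s⟫ * (⟪u, u⟫ * ⟪y, y⟫ - ⟪u, y⟫ ^ 2))) := by
  obtain ⟨huu, hyy⟩ := inner_self_pos_of_gram_det_pos hy
  obtain ⟨-, hss⟩ := inner_self_pos_of_gram_det_pos hs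
  rw [gMI_singleton_singleton_nil, gMI_singleton_singleton_nil, ← mul_sub,
    ← logb_div (by positivity) (by positivity)]
  congr 2
  field_simp

end

lemma dirty_paper_gram_det {P Q N : ℝ} (hPN : P + N ≠ 0) :
    (P + (P / (P + N)) ^ 2 * Q) * (P + Q + N) - (P + P / (P + N) * Q) ^ 2 =
      P * N * (P + Q + N) / (P + N) := by
  field_simp
  ring

/-- Costa's dirty-paper coding identity: with `Y = X + S + Z`,
`α = P/(P+N)` and `U = X + αS`, one has `I(U;Y) - I(U;S) = ½ log₂(1 + P/N)`. -/
theorem stmt5 {V : Type*} [NormedAddCommGroup V] [InnerProductSpace ℝ V]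
    (P Q N : ℝ) (hP : 0 < P) (hQ : 0 < Q) (hN : 0 < N)
    (x s z y u : V)
    (hx : ⟪x, x⟫ = P) (hs : ⟪s, s⟫ = Q) (hz : ⟪z, z⟫ = N)
    (hxs : ⟪x, s⟫ = 0) (hxz : ⟪x, z⟫ = 0) (hsz : ⟪s, z⟫ = 0)
    (hy : y = x + s + z) (hu : u = x + (P / (P + N)) • s) :
    gMI ![u] ![y] (![] : Fin 0 → V) - gMI ![u] ![s] (![] : Fin 0 → V) =
      (1/2) * Real.logb 2 (1 + P / N) := by
  have hPN : 0 < P + N := by positivity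
  have orth : ⟪s, x⟫ = 0 ∧ ⟪z, x⟫ = 0 ∧ ⟪z, s⟫ = 0 := by
    simp only [real_inner_comm, hxs, hxz, hsz, and_self]
  have hdet_uy := dirty_paper_gram_det (Q := Q) hPN.ne'
  subst hy hu
  set α := P / (P + N)
  have inner_eq : ⟪x + α • s, x + α • s⟫ = P + α ^ 2 * Q ∧ ⟪x + s + z, x + s + z⟫ = P + Q + N ∧
      ⟪x + α • s, x + s + z⟫ = P + α * Q ∧ ⟪x + α • s, s⟫ = α * Q := by
    simp only [inner_add_left, inner_add_right, real_inner_smul_left, real_inner_smul_right,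
      hx, hs, hz, hxs, hxz, hsz, orth]
    refine ⟨by ring, by ring, by ring, by ring⟩
  obtain ⟨huu, hyy, huy, hus⟩ := inner_eq
  have hdet_us : (P + α ^ 2 * Q) * Q - (α * Q) ^ 2 = P * Q := by ring
  rw [gMI_sub_gMI_singleton, huu, hyy, huy, hus, hs, hdet_us, hdet_uy]
  · congr 2
    field_simp
    ring
  · rw [huu, hyy, huy, hdet_uy]; positivity
  · rw [huu, hus, hs, hdet_us]; positivity
end

section
/- Let S, X₁, X₂, Z₂, Z₃ be jointly Gaussian zero-mean with the covariance structure Var(X₁)=P̃₁, Var(X₂)=P̃₂, Var(S)=Q, Cov(X₁,X₂)=ρ₁₂√(P̃₁P̃₂), Cov(X₂,S)=ρ₂ₛ√(P̃₂Q), Cov(X₁,S)=0, and Z₂~N(0,N₂), Z₃~N(0,N₃) independent of everything. Set Y₂=X₁+Z₂ and Y₃'=X₁+Z₃. Then I(X₁; Y₂, Y₃' | S, X₂) = ½·log₂(1 + P̃₁(1 − ρ₁₂²/(1−ρ₂ₛ²))·(1/N₂ + 1/N₃)). -/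
/-!
Conditioning on `(S, X₂)` leaves of `X₁` only its innovation, of variance
`σ² = det G(X₁, S, X₂) / det G(S, X₂) = P̃₁ (1 - ρ₁₂² / (1 - ρ₂ₛ²))`, seen through two
independent noisy channels. Since the noises are orthogonal to everything else, the Gram
determinants containing them factor as
`det G(Y₂, Y₃', S, X₂) = N₂ N₃ det G(S, X₂) + (N₂ + N₃) det G(X₁, S, X₂)` and
`det G(X₁, Y₂, Y₃', S, X₂) = N₂ N₃ det G(X₁, S, X₂)`, and the determinant ratio defining the
mutual information collapses to `1 + σ² (1/N₂ + 1/N₃)`.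
-/

open RealInnerProductSpace

section GramDeterminants

variable {V : Type*} [NormedAddCommGroup V] [InnerProductSpace ℝ V]

theorem gMI_single_pair_pair (x y₁ y₂ u v : V) :
    gMI ![x] ![y₁, y₂] ![u, v] =
      (1/2) * Real.logb 2 ((gramM ![x, u, v]).det * (gramM ![y₁, y₂, u, v]).det /
        ((gramM ![x, y₁, y₂, u, v]).det * (gramM ![u, v]).det)) := by
  have h₃ : Fin.append ![x] ![u, v] = ![x, u, v] := by ext i; fin_cases i <;> rfl
  have h₄ : Fin.append ![y₁, y₂] ![u, v] = ![y₁, y₂, u, v] := by ext i; fin_cases i <;> rfl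
  have h₅ : Fin.append ![x] ![y₁, y₂, u, v] = ![x, y₁, y₂, u, v] := by
    ext i; fin_cases i <;> rfl
  rw [gMI, h₃, h₄, h₅]

theorem det_gramM_pair (u v : V) : (gramM ![u, v]).det = ⟪u, u⟫ * ⟪v, v⟫ - ⟪u, v⟫ ^ 2 := by
  simp [gramM, Matrix.det_fin_two, real_inner_comm u v, sq]

theorem det_gramM_triple_of_inner_eq_zero {x u v : V} (hxu : ⟪x, u⟫ = 0) :
    (gramM ![x, u, v]).det = ⟪x, x⟫ * (gramM ![u, v]).det - ⟪x, v⟫ ^ 2 * ⟪u, u⟫ := by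
  rw [det_gramM_pair]
  simp only [gramM, Matrix.det_fin_three, Matrix.of_apply, Matrix.cons_val_zero,
    Matrix.cons_val_one, Matrix.cons_val, real_inner_comm x, real_inner_comm u v, hxu, mul_zero,
    zero_mul, sub_zero, add_zero]
  ring

section Noise

variable {x u v z₁ z₂ : V}
  (h₁x : ⟪z₁, x⟫ = 0) (h₁u : ⟪z₁, u⟫ = 0) (h₁v : ⟪z₁, v⟫ = 0)
  (h₂x : ⟪z₂, x⟫ = 0) (h₂u : ⟪z₂, u⟫ = 0) (h₂v : ⟪z₂, v⟫ = 0) (h₁₂ : ⟪z₁, z₂⟫ = 0)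
include h₁x h₁u h₁v h₂x h₂u h₂v h₁₂

theorem gramM_add_noise :
    gramM ![x + z₁, x + z₂, u, v] =
      !![⟪x, x⟫ + ⟪z₁, z₁⟫, ⟪x, x⟫, ⟪x, u⟫, ⟪x, v⟫;
         ⟪x, x⟫, ⟪x, x⟫ + ⟪z₂, z₂⟫, ⟪x, u⟫, ⟪x, v⟫;
         ⟪x, u⟫, ⟪x, u⟫, ⟪u, u⟫, ⟪u, v⟫;
         ⟪x, v⟫, ⟪x, v⟫, ⟪u, v⟫, ⟪v, v⟫] := by
  ext i j
  fin_cases i <;> fin_cases j <;>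
    simp [gramM, inner_add_left, inner_add_right, real_inner_comm z₁ x, real_inner_comm z₂ x,
      real_inner_comm z₁ u, real_inner_comm z₂ u, real_inner_comm z₁ v, real_inner_comm z₂ v,
      real_inner_comm z₁ z₂, real_inner_comm x u, real_inner_comm x v, real_inner_comm u v,
      h₁x, h₁u, h₁v, h₂x, h₂u, h₂v, h₁₂, -inner_self_eq_norm_sq_to_K]

theorem gramM_cons_add_noise :
    gramM ![x, x + z₁, x + z₂, u, v] =
      !![⟪x, x⟫, ⟪x, x⟫, ⟪x, x⟫, ⟪x, u⟫, ⟪x, v⟫;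
         ⟪x, x⟫, ⟪x, x⟫ + ⟪z₁, z₁⟫, ⟪x, x⟫, ⟪x, u⟫, ⟪x, v⟫;
         ⟪x, x⟫, ⟪x, x⟫, ⟪x, x⟫ + ⟪z₂, z₂⟫, ⟪x, u⟫, ⟪x, v⟫;
         ⟪x, u⟫, ⟪x, u⟫, ⟪x, u⟫, ⟪u, u⟫, ⟪u, v⟫;
         ⟪x, v⟫, ⟪x, v⟫, ⟪x, v⟫, ⟪u, v⟫, ⟪v, v⟫] := by
  ext i j
  fin_cases i <;> fin_cases j <;>
    simp [gramM, inner_add_left, inner_add_right, real_inner_comm z₁ x, real_inner_comm z₂ x,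
      real_inner_comm z₁ u, real_inner_comm z₂ u, real_inner_comm z₁ v, real_inner_comm z₂ v,
      real_inner_comm z₁ z₂, real_inner_comm x u, real_inner_comm x v, real_inner_comm u v,
      h₁x, h₁u, h₁v, h₂x, h₂u, h₂v, h₁₂, -inner_self_eq_norm_sq_to_K]

theorem det_gramM_add_noise :
    (gramM ![x + z₁, x + z₂, u, v]).det =
      ⟪z₁, z₁⟫ * ⟪z₂, z₂⟫ * (gramM ![u, v]).det +
        (⟪z₁, z₁⟫ + ⟪z₂, z₂⟫) * (gramM ![x, u, v]).det := by
  rw [gramM_add_noise h₁x h₁u h₁v h₂x h₂u h₂v h₁₂]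
  simp [gramM, Matrix.det_succ_row_zero, Fin.sum_univ_succ, Fin.succAbove, real_inner_comm x u,
    real_inner_comm x v, real_inner_comm u v, -inner_self_eq_norm_sq_to_K]
  ring

theorem det_gramM_cons_add_noise :
    (gramM ![x, x + z₁, x + z₂, u, v]).det = ⟪z₁, z₁⟫ * ⟪z₂, z₂⟫ * (gramM ![x, u, v]).det := by
  rw [gramM_cons_add_noise h₁x h₁u h₁v h₂x h₂u h₂v h₁₂]
  simp [gramM, Matrix.det_succ_row_zero, Fin.sum_univ_succ, Fin.succAbove, real_inner_comm x u,
    real_inner_comm x v, real_inner_comm u v, -inner_self_eq_norm_sq_to_K]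
  ring

end Noise

section Correlations

variable {x u v : V} {P Q R ρ₁ ρ₂ : ℝ} (hQ : 0 < Q) (hR : 0 < R)
  (hu : ⟪u, u⟫ = Q) (hv : ⟪v, v⟫ = R) (hvu : ⟪v, u⟫ = ρ₂ * √(R * Q))
include hQ hR hu hv hvu

theorem det_gramM_pair_of_correlation : (gramM ![u, v]).det = Q * R * (1 - ρ₂ ^ 2) := by
  rw [det_gramM_pair, hu, hv, real_inner_comm, hvu, mul_pow, Real.sq_sqrt (by positivity)]
  ring

theorem det_gramM_triple_div_pair (hP : 0 ≤ P) (hρ₂ : ρ₂ ^ 2 < 1) (hx : ⟪x, x⟫ = P)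
    (hxv : ⟪x, v⟫ = ρ₁ * √(P * R)) (hxu : ⟪x, u⟫ = 0) :
    (gramM ![x, u, v]).det / (gramM ![u, v]).det = P * (1 - ρ₁ ^ 2 / (1 - ρ₂ ^ 2)) := by
  have hρ : 1 - ρ₂ ^ 2 ≠ 0 := by linarith
  rw [det_gramM_triple_of_inner_eq_zero hxu, det_gramM_pair_of_correlation hQ hR hu hv hvu, hx,
    hxv, hu, mul_pow, Real.sq_sqrt (by positivity)]
  field_simp

end Correlations

end GramDeterminants

/-- For `D₃ = 0` the left argument is `0 / 0 = 0` and the right one is `1`; both logarithms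
vanish. -/
theorem logb_det_ratio_eq_logb_one_add (b D₂ D₃ N₁ N₂ : ℝ) (hD₂ : D₂ ≠ 0) (hN₁ : N₁ ≠ 0)
    (hN₂ : N₂ ≠ 0) :
    Real.logb b (D₃ * (N₁ * N₂ * D₂ + (N₁ + N₂) * D₃) / (N₁ * N₂ * D₃ * D₂)) =
      Real.logb b (1 + D₃ / D₂ * (1 / N₁ + 1 / N₂)) := by
  rcases eq_or_ne D₃ 0 with rfl | hD₃
  · simp
  · congr 1
    field_simp
    ring

/-- `I(X₁; Y₂, Y₃' | S, X₂) = ½ log₂(1 + P̃₁(1 - ρ₁₂²/(1-ρ₂ₛ²))(1/N₂ + 1/N₃))`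
where `Y₂ = X₁ + Z₂` and `Y₃' = X₁ + Z₃`. -/
theorem stmt9 {V : Type*} [NormedAddCommGroup V] [InnerProductSpace ℝ V]
    (P1t P2t Q N2 N3 ρ12 ρ2s : ℝ)
    (hP1 : 0 < P1t) (hP2 : 0 < P2t) (hQ : 0 < Q) (hN2 : 0 < N2) (hN3 : 0 < N3)
    (hρ2s : ρ2s ^ 2 < 1)
    (s x1 x2 z2 z3 : V)
    (hx1 : ⟪x1, x1⟫ = P1t) (hx2 : ⟪x2, x2⟫ = P2t) (hs : ⟪s, s⟫ = Q)
    (hx1x2 : ⟪x1, x2⟫ = ρ12 * Real.sqrt (P1t * P2t))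
    (hx2s : ⟪x2, s⟫ = ρ2s * Real.sqrt (P2t * Q)) (hx1s : ⟪x1, s⟫ = 0)
    (hz2 : ⟪z2, z2⟫ = N2) (hz3 : ⟪z3, z3⟫ = N3)
    (hz2x1 : ⟪z2, x1⟫ = 0) (hz2x2 : ⟪z2, x2⟫ = 0) (hz2s : ⟪z2, s⟫ = 0)
    (hz3x1 : ⟪z3, x1⟫ = 0) (hz3x2 : ⟪z3, x2⟫ = 0) (hz3s : ⟪z3, s⟫ = 0)
    (hz2z3 : ⟪z2, z3⟫ = 0) :
    gMI ![x1] ![x1 + z2, x1 + z3] ![s, x2] =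
      (1/2) * Real.logb 2
        (1 + P1t * (1 - ρ12 ^ 2 / (1 - ρ2s ^ 2)) * (1 / N2 + 1 / N3)) := by
  have hD₂ : (gramM ![s, x2]).det ≠ 0 := by
    rw [det_gramM_pair_of_correlation hQ hP2 hs hx2 hx2s]
    have : 0 < 1 - ρ2s ^ 2 := by linarith
    positivity
  rw [gMI_single_pair_pair,
    det_gramM_add_noise hz2x1 hz2s hz2x2 hz3x1 hz3s hz3x2 hz2z3,
    det_gramM_cons_add_noise hz2x1 hz2s hz2x2 hz3x1 hz3s hz3x2 hz2z3, hz2, hz3,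
    logb_det_ratio_eq_logb_one_add _ _ _ _ _ hD₂ hN2.ne' hN3.ne',
    det_gramM_triple_div_pair hQ hP2 hs hx2 hx2s hP1.le hρ2s hx1 hx1x2 hx1s]
end

section
/- Let P₁,P₂,Q,N₂,N₃ > 0 and define N₂* = max over ζ∈[−1,0] of P₁N₃(P₂+Q+N₃+2ζ√(P₂Q)) / (P₁N₃ + P₂(1−ζ²)(P₁+P₂+Q+N₃+2ζ√(P₂Q))). If N₂ ≥ N₂*, then ½·log₂(1+P₁/N₂) ≤ max over ρ∈[−1,0] of [ ½·log₂(1 + P₁/(P₂+Q+N₃+2ρ√(P₂Q))) + ½·log₂(1 + P₂(1−ρ²)/N₃) ]. -/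
set_option maxHeartbeats 400000


open Real

/-- if `N₂ ≥ N₂*` (the maximum over `ζ ∈ [-1,0]` of the stated expression),
then the interference-free rate `½log₂(1+P₁/N₂)` is dominated by the maximum over
`ρ ∈ [-1,0]` of the decode-and-forward lower bound with `θ=1, ρ'₁₂=0`. -/
theorem stmt11 (P1 P2 Q N2 N3 : ℝ)
    (hP1 : 0 < P1) (hP2 : 0 < P2) (hQ : 0 < Q) (hN2 : 0 < N2) (hN3 : 0 < N3)
    (hN2ge : sSup ((fun ζ : ℝ =>
        P1 * N3 * (P2 + Q + N3 + 2 * ζ * Real.sqrt (P2 * Q)) /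
          (P1 * N3 + P2 * (1 - ζ ^ 2) * (P1 + P2 + Q + N3 + 2 * ζ * Real.sqrt (P2 * Q)))) ''
        Set.Icc (-1:ℝ) 0) ≤ N2) :
    (1/2) * logb 2 (1 + P1 / N2) ≤
      sSup ((fun ρ : ℝ =>
        (1/2) * logb 2 (1 + P1 / (P2 + Q + N3 + 2 * ρ * Real.sqrt (P2 * Q))) +
        (1/2) * logb 2 (1 + P2 * (1 - ρ ^ 2) / N3)) '' Set.Icc (-1:ℝ) 0) := by
  have hs0 : (0:ℝ) ≤ Real.sqrt (P2 * Q) := Real.sqrt_nonneg _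
  have hs2 : Real.sqrt (P2 * Q) ^ 2 = P2 * Q := Real.sq_sqrt (by positivity)
  set s := Real.sqrt (P2 * Q) with hs_def
  clear_value s
  have h2s : 2 * s ≤ P2 + Q := by
    nlinarith [sq_nonneg (P2 - Q), sq_nonneg (P2 + Q - 2 * s)]
  -- the value of the LHS function at ζ = 0
  set N0 : ℝ := P1 * N3 * (P2 + Q + N3) / (P1 * N3 + P2 * (P1 + P2 + Q + N3)) with hN0_def
  clear_value N0
  have hden0 : (0:ℝ) < P1 * N3 + P2 * (P1 + P2 + Q + N3) := by positivity
  have hN0pos : 0 < N0 := by rw [hN0_def]; positivity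
  have hN0le : N0 ≤ N2 := by
    have hbdd : BddAbove ((fun ζ : ℝ =>
        P1 * N3 * (P2 + Q + N3 + 2 * ζ * s) /
          (P1 * N3 + P2 * (1 - ζ ^ 2) * (P1 + P2 + Q + N3 + 2 * ζ * s))) ''
        Set.Icc (-1:ℝ) 0) := by
      refine ⟨P2 + Q + N3, ?_⟩
      rintro x ⟨ζ, hζ, rfl⟩
      dsimp only
      obtain ⟨h1, h2⟩ := hζ
      have hDpos : 0 < P2 + Q + N3 + 2 * ζ * s := by nlinarith
      have hζsq : 1 - ζ ^ 2 ≥ 0 := by nlinarith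
      have hBpos : 0 < P1 * N3 + P2 * (1 - ζ ^ 2) * (P1 + P2 + Q + N3 + 2 * ζ * s) := by
        nlinarith [mul_nonneg (mul_nonneg hP2.le hζsq) (add_pos hP1 hDpos).le,
          mul_pos hP1 hN3]
      rw [div_le_iff₀ hBpos]
      nlinarith [mul_nonneg (mul_nonneg hP2.le hζsq) hDpos.le,
        mul_pos hP1 hN3, mul_nonneg hs0 (neg_nonneg.mpr h2)]
    have hmem : N0 ∈ ((fun ζ : ℝ =>
        P1 * N3 * (P2 + Q + N3 + 2 * ζ * s) /
          (P1 * N3 + P2 * (1 - ζ ^ 2) * (P1 + P2 + Q + N3 + 2 * ζ * s))) ''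
        Set.Icc (-1:ℝ) 0) := ⟨0, ⟨by norm_num, le_refl 0⟩, by rw [hN0_def]; norm_num⟩
    exact le_trans (le_csSup hbdd hmem) hN2ge
  -- key identity: 1 + P1/N0 = (1 + P1/(P2+Q+N3)) * (1 + P2/N3)
  have hid : 1 + P1 / N0 = (1 + P1 / (P2 + Q + N3)) * (1 + P2 / N3) := by
    rw [hN0_def]
    field_simp
    ring
  have hx1 : (0:ℝ) < 1 + P1 / (P2 + Q + N3) := by positivity
  have hx2 : (0:ℝ) < 1 + P2 / N3 := by positivity
  have step1 : logb 2 (1 + P1 / N2) ≤ logb 2 (1 + P1 / N0) := by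
    apply Real.logb_le_logb_of_le one_lt_two (by positivity)
    have : P1 / N2 ≤ P1 / N0 := div_le_div_of_nonneg_left hP1.le hN0pos hN0le
    linarith
  have step2 : logb 2 (1 + P1 / N0)
      = logb 2 (1 + P1 / (P2 + Q + N3)) + logb 2 (1 + P2 / N3) := by
    rw [hid, Real.logb_mul hx1.ne' hx2.ne']
  have hbdd2 : BddAbove ((fun ρ : ℝ =>
        (1/2) * logb 2 (1 + P1 / (P2 + Q + N3 + 2 * ρ * s)) +
        (1/2) * logb 2 (1 + P2 * (1 - ρ ^ 2) / N3)) '' Set.Icc (-1:ℝ) 0) := by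
    refine ⟨(1/2) * logb 2 (1 + P1 / N3) + (1/2) * logb 2 (1 + P2 / N3), ?_⟩
    rintro x ⟨ρ, hρ, rfl⟩
    dsimp only
    obtain ⟨h1, h2⟩ := hρ
    have hDge : N3 ≤ P2 + Q + N3 + 2 * ρ * s := by nlinarith
    have hDpos : 0 < P2 + Q + N3 + 2 * ρ * s := lt_of_lt_of_le hN3 hDge
    have hρsq : 1 - ρ ^ 2 ≥ 0 := by nlinarith
    have t1 : logb 2 (1 + P1 / (P2 + Q + N3 + 2 * ρ * s)) ≤ logb 2 (1 + P1 / N3) := by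
      apply Real.logb_le_logb_of_le one_lt_two (by positivity)
      have := div_le_div_of_nonneg_left hP1.le hN3 hDge
      linarith
    have t2 : logb 2 (1 + P2 * (1 - ρ ^ 2) / N3) ≤ logb 2 (1 + P2 / N3) := by
      apply Real.logb_le_logb_of_le one_lt_two
      · have : 0 ≤ P2 * (1 - ρ ^ 2) / N3 := by positivity
        linarith
      · have hnum : P2 * (1 - ρ ^ 2) ≤ P2 := by nlinarith
        have : P2 * (1 - ρ ^ 2) / N3 ≤ P2 / N3 := div_le_div_of_nonneg_right hnum hN3.le
        linarith
    linarith
  have hmem2 : (1/2) * logb 2 (1 + P1 / (P2 + Q + N3)) + (1/2) * logb 2 (1 + P2 / N3)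
      ∈ ((fun ρ : ℝ =>
        (1/2) * logb 2 (1 + P1 / (P2 + Q + N3 + 2 * ρ * s)) +
        (1/2) * logb 2 (1 + P2 * (1 - ρ ^ 2) / N3)) '' Set.Icc (-1:ℝ) 0) :=
    ⟨0, ⟨by norm_num, le_refl 0⟩, by norm_num⟩
  calc (1/2) * logb 2 (1 + P1 / N2) ≤ (1/2) * logb 2 (1 + P1 / N0) := by linarith
    _ = (1/2) * logb 2 (1 + P1 / (P2 + Q + N3)) + (1/2) * logb 2 (1 + P2 / N3) := by
        rw [step2]; ring
    _ ≤ _ := le_csSup hbdd2 hmem2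
end

section
/- As Q → ∞, the upper bound R^up_DG(Q) = max over ρ₁₂∈[0,1], ρ₂ₛ∈[−1,0] with ρ₁₂²+ρ₂ₛ²≤1 of min{ ½log₂(1+P₁(1−ρ₁₂²−ρ₂ₛ²)/(N₂(1−ρ₂ₛ²))), ½log₂(1+(√P₁+ρ₁₂√P₂)²/(P₂(1−ρ₁₂²−ρ₂ₛ²)+(√Q+ρ₂ₛ√P₂)²+N₃)) + ½log₂(1+P₂(1−ρ₁₂²−ρ₂ₛ²)/N₃) } converges to min{ ½log₂(1+P₁/N₂), ½log₂(1+P₂/N₃) }. -/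
open Real Filter Topology

/-
The capacity term whose signal-to-noise ratio has `Q` in its denominator vanishes uniformly in
the correlations: since `ρ₁₂ ≤ 1` and `ρ₂ₛ ≤ 0`, it is at most `relayGap`, whose denominator is
`(√Q - √P₂)² + N₃`. The other capacity terms only grow when the correlations are switched off,
so every rate is at most `min (gaussCap (P₁/N₂)) (gaussCap (P₂/N₃)) + relayGap`, while
`ρ₁₂ = ρ₂ₛ = 0` attains at least that minimum.
-/

noncomputable def gaussCap (x : ℝ) : ℝ := (1 / 2) * logb 2 (1 + x)

lemma gaussCap_nonneg {x : ℝ} (hx : 0 ≤ x) : 0 ≤ gaussCap x := by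
  have := logb_nonneg one_lt_two (by linarith : 1 ≤ 1 + x)
  unfold gaussCap
  positivity

lemma gaussCap_le_gaussCap {x y : ℝ} (hx : 0 ≤ x) (hxy : x ≤ y) : gaussCap x ≤ gaussCap y := by
  unfold gaussCap
  gcongr
  norm_num

lemma tendsto_gaussCap_nhds_zero : Tendsto gaussCap (𝓝 0) (𝓝 0) := by
  have hcont : ContinuousAt gaussCap 0 :=
    continuousAt_const.mul
      ((continuousAt_logb (by norm_num)).comp (continuousAt_const.add continuousAt_id))
  simpa [gaussCap] using hcont.tendsto

lemma mul_div_mul_le_div {P N u v : ℝ} (hP : 0 ≤ P) (hN : 0 ≤ N) (hu : 0 ≤ u) (huv : u ≤ v) :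
    P * u / (N * v) ≤ P / N := by
  rw [mul_div_mul_comm]
  exact mul_le_of_le_one_right (div_nonneg hP hN) (div_le_one_of_le₀ huv (hu.trans huv))

lemma sq_add_mul_le_sq_add {x y ρ : ℝ} (hx : 0 ≤ x) (hy : 0 ≤ y) (hρ : ρ ∈ Set.Icc (0 : ℝ) 1) :
    (x + ρ * y) ^ 2 ≤ (x + y) ^ 2 :=
  pow_le_pow_left₀ (by nlinarith [hρ.1]) (by nlinarith [hρ.2]) 2

lemma sq_sub_le_sq_add_mul {x y ρ : ℝ} (hy : 0 ≤ y) (hyx : y ≤ x) (hρ : ρ ∈ Set.Icc (-1 : ℝ) 0) :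
    (x - y) ^ 2 ≤ (x + ρ * y) ^ 2 :=
  pow_le_pow_left₀ (sub_nonneg.2 hyx) (by nlinarith [hρ.1]) 2

lemma tendsto_csSup_of_squeeze {α : Type*} {l : Filter α} {S : α → Set ℝ} {L : ℝ} {δ : α → ℝ}
    (hδ : Tendsto δ l (𝓝 0)) (hlow : ∀ᶠ x in l, ∃ r ∈ S x, L ≤ r)
    (hup : ∀ᶠ x in l, ∀ r ∈ S x, r ≤ L + δ x) :
    Tendsto (fun x => sSup (S x)) l (𝓝 L) := by
  refine tendsto_of_tendsto_of_tendsto_of_le_of_le' tendsto_const_nhds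
    (by simpa using tendsto_const_nhds.add hδ) ?_ ?_
  · filter_upwards [hlow, hup] with x ⟨r, hr, hLr⟩ hle
    exact hLr.trans (le_csSup ⟨_, hle⟩ hr)
  · filter_upwards [hlow, hup] with x ⟨r, hr, _⟩ hle
    exact csSup_le ⟨r, hr⟩ hle

section RelayChannel

variable {P1 P2 N2 N3 Q ρ12 ρ2s : ℝ}

noncomputable def relayRate (P1 P2 N2 N3 Q ρ12 ρ2s : ℝ) : ℝ :=
  min (gaussCap (P1 * (1 - ρ12 ^ 2 - ρ2s ^ 2) / (N2 * (1 - ρ2s ^ 2))))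
    (gaussCap ((√P1 + ρ12 * √P2) ^ 2 /
        (P2 * (1 - ρ12 ^ 2 - ρ2s ^ 2) + (√Q + ρ2s * √P2) ^ 2 + N3)) +
      gaussCap (P2 * (1 - ρ12 ^ 2 - ρ2s ^ 2) / N3))

noncomputable def relayGap (P1 P2 N3 Q : ℝ) : ℝ :=
  gaussCap ((√P1 + √P2) ^ 2 / ((√Q - √P2) ^ 2 + N3))

lemma tendsto_relayGap_atTop : Tendsto (relayGap P1 P2 N3) atTop (𝓝 0) := by
  have hden : Tendsto (fun Q => (√Q - √P2) ^ 2 + N3) atTop atTop :=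
    tendsto_atTop_add_const_right _ _ <| (tendsto_pow_atTop two_ne_zero).comp <|
      tendsto_atTop_add_const_right _ _ tendsto_sqrt_atTop
  exact tendsto_gaussCap_nhds_zero.comp (tendsto_const_nhds.div_atTop hden)

lemma gaussCap_relay_le_relayGap (hP2 : 0 ≤ P2) (hN3 : 0 < N3) (hQ : P2 ≤ Q)
    (h12 : ρ12 ∈ Set.Icc (0 : ℝ) 1) (h2s : ρ2s ∈ Set.Icc (-1 : ℝ) 0)
    (hρ : ρ12 ^ 2 + ρ2s ^ 2 ≤ 1) :
    gaussCap ((√P1 + ρ12 * √P2) ^ 2 /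
        (P2 * (1 - ρ12 ^ 2 - ρ2s ^ 2) + (√Q + ρ2s * √P2) ^ 2 + N3)) ≤ relayGap P1 P2 N3 Q := by
  have hden : (√Q - √P2) ^ 2 + N3 ≤
      P2 * (1 - ρ12 ^ 2 - ρ2s ^ 2) + (√Q + ρ2s * √P2) ^ 2 + N3 := by
    have := sq_sub_le_sq_add_mul (sqrt_nonneg P2) (sqrt_le_sqrt hQ) h2s
    nlinarith
  have hden_pos : 0 < (√Q - √P2) ^ 2 + N3 := by positivity
  exact gaussCap_le_gaussCap (div_nonneg (sq_nonneg _) (hden_pos.trans_le hden).le)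
    (div_le_div₀ (sq_nonneg _) (sq_add_mul_le_sq_add (sqrt_nonneg _) (sqrt_nonneg _) h12)
      hden_pos hden)

lemma relayRate_le (hP1 : 0 ≤ P1) (hP2 : 0 ≤ P2) (hN2 : 0 ≤ N2) (hN3 : 0 < N3) (hQ : P2 ≤ Q)
    (h12 : ρ12 ∈ Set.Icc (0 : ℝ) 1) (h2s : ρ2s ∈ Set.Icc (-1 : ℝ) 0)
    (hρ : ρ12 ^ 2 + ρ2s ^ 2 ≤ 1) :
    relayRate P1 P2 N2 N3 Q ρ12 ρ2s ≤
      min (gaussCap (P1 / N2)) (gaussCap (P2 / N3)) + relayGap P1 P2 N3 Q := by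
  have hfree : 0 ≤ 1 - ρ12 ^ 2 - ρ2s ^ 2 := by linarith
  have hrelay := gaussCap_relay_le_relayGap (P1 := P1) hP2 hN3 hQ h12 h2s hρ
  have hsource : gaussCap (P1 * (1 - ρ12 ^ 2 - ρ2s ^ 2) / (N2 * (1 - ρ2s ^ 2))) ≤
      gaussCap (P1 / N2) :=
    gaussCap_le_gaussCap (by apply div_nonneg <;> nlinarith)
      (mul_div_mul_le_div hP1 hN2 hfree (by nlinarith))
  have hdest : gaussCap (P2 * (1 - ρ12 ^ 2 - ρ2s ^ 2) / N3) ≤ gaussCap (P2 / N3) :=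
    gaussCap_le_gaussCap (by positivity) (by gcongr; nlinarith)
  have hgap : 0 ≤ relayGap P1 P2 N3 Q := gaussCap_nonneg (by positivity)
  rw [← min_add_add_right]
  exact min_le_min (by linarith) (by linarith)

lemma min_le_relayRate_zero_zero (hP2 : 0 ≤ P2) (hN3 : 0 < N3) :
    min (gaussCap (P1 / N2)) (gaussCap (P2 / N3)) ≤ relayRate P1 P2 N2 N3 Q 0 0 := by
  have hrelay : 0 ≤ gaussCap ((√P1 + 0 * √P2) ^ 2 /
      (P2 * (1 - 0 ^ 2 - 0 ^ 2) + (√Q + 0 * √P2) ^ 2 + N3)) :=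
    gaussCap_nonneg (div_nonneg (sq_nonneg _) (by norm_num; positivity))
  rw [relayRate, show P1 * (1 - 0 ^ 2 - 0 ^ 2) / (N2 * (1 - 0 ^ 2)) = P1 / N2 by norm_num,
    show P2 * (1 - 0 ^ 2 - 0 ^ 2) / N3 = P2 / N3 by norm_num]
  exact min_le_min_left _ (le_add_of_nonneg_left hrelay)

end RelayChannel

/-- as `Q → ∞`, the upper bound `R^up_DG(Q)` of Corollary 3 for the
degraded Gaussian relay channel with informed relay converges to
`min{½log₂(1+P₁/N₂), ½log₂(1+P₂/N₃)}`. -/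
theorem stmt13 (P1 P2 N2 N3 : ℝ)
    (hP1 : 0 < P1) (hP2 : 0 < P2) (hN2 : 0 < N2) (hN3 : 0 < N3) :
    Tendsto (fun Q : ℝ =>
      sSup {r : ℝ | ∃ ρ12 ∈ Set.Icc (0:ℝ) 1, ∃ ρ2s ∈ Set.Icc (-1:ℝ) 0,
        ρ12 ^ 2 + ρ2s ^ 2 ≤ 1 ∧
        r = min
          ((1/2) * logb 2 (1 + P1 * (1 - ρ12 ^ 2 - ρ2s ^ 2) / (N2 * (1 - ρ2s ^ 2))))
          ((1/2) * logb 2 (1 + (Real.sqrt P1 + ρ12 * Real.sqrt P2) ^ 2 /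
              (P2 * (1 - ρ12 ^ 2 - ρ2s ^ 2) + (Real.sqrt Q + ρ2s * Real.sqrt P2) ^ 2 + N3)) +
           (1/2) * logb 2 (1 + P2 * (1 - ρ12 ^ 2 - ρ2s ^ 2) / N3))})
      atTop
      (nhds (min ((1/2) * logb 2 (1 + P1 / N2)) ((1/2) * logb 2 (1 + P2 / N3)))) := by
  refine tendsto_csSup_of_squeeze (δ := relayGap P1 P2 N3) tendsto_relayGap_atTop
    (Eventually.of_forall fun Q => ⟨_, ⟨0, by norm_num, 0, by norm_num, by norm_num, rfl⟩,
      min_le_relayRate_zero_zero hP2.le hN3⟩) ?_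
  filter_upwards [eventually_ge_atTop P2] with Q hQ
  rintro _ ⟨ρ12, h12, ρ2s, h2s, hρ, rfl⟩
  exact relayRate_le hP1.le hP2.le hN2.le hN3 hQ h12 h2s hρ
end

section
/- Let X̃₁, X̃₂, S, Z₃ be jointly Gaussian zero-mean, X̃₁ of variance γP₁ independent of (X̃₂,S,Z₃), X̃₂ of variance θP₂ with E[X̃₂S]=ρ'₂ₛ√(θP₂Q), S of variance Q, Z₃~N(0,N₃) independent of the rest. Define P'₂=θP₂(1−ρ'₂ₛ²), Q'=(√Q+ρ'₂ₛ√(θP₂))², U₂ = X̃₂ + [α'(1+ρ'₂ₛ√(θP₂/Q)) − ρ'₂ₛ√(θP₂/Q)]·S for α'∈ℝ, and Ỹ₃ = X̃₂+S+Z₃. Then I(X̃₁; X̃₁+Ỹ₃ | U₂) = ½·log₂(1 + γP₁/(N₃ + Φ)) where Φ = P'₂Q'(1−α')²/(P'₂+α'²Q'), provided P'₂+α'²Q' > 0. -/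
open RealInnerProductSpace

/-!
Everything reduces to Gram determinants. If `X ⟂ W` and `X ⟂ U`, the determinant formula
collapses to `I(X; X + W | U) = ½ log₂ (1 + ‖X‖² / Φ)`, where `Φ = ‖W‖² - ⟪W, U⟫² / ‖U‖²` is
the variance of `W` left after conditioning on `U`.

Write `X̃₂ = c S + E` with `c = ρ'₂ₛ √(θP₂/Q)` and `E ⟂ S`, so that `‖E‖² = P'₂`, and put
`S' = (1 + c) S`, so that `‖S'‖² = Q'`. Then `Ỹ₃ = E + S' + Z₃` and `U₂ = E + α' S'` with
`E, S', Z₃` pairwise orthogonal: Costa's dirty-paper setting, where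
`Φ = N₃ + P'₂ Q' (1 - α')² / (P'₂ + α'² Q')`.
-/

section GaussianInnerProduct

variable {V : Type*} [NormedAddCommGroup V] [InnerProductSpace ℝ V]

noncomputable def residualVar (w u : V) : ℝ := ⟪w, w⟫ - ⟪w, u⟫ ^ 2 / ⟪u, u⟫

theorem det_gramM_single (x : V) : (gramM ![x]).det = ⟪x, x⟫ := by
  simp [gramM]

theorem det_gramM_append_single (x y : V) :
    (gramM (Fin.append ![x] ![y])).det = ⟪x, x⟫ * ⟪y, y⟫ - ⟪x, y⟫ ^ 2 := by
  have h : Fin.append ![x] ![y] = ![x, y] := by funext i; fin_cases i <;> rfl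
  rw [h, gramM, Matrix.det_fin_two]
  simp only [Matrix.of_apply, Matrix.cons_val, real_inner_comm x y]
  ring

theorem det_gramM_append_append_single (x y z : V) (hxz : ⟪x, z⟫ = 0) :
    (gramM (Fin.append ![x] (Fin.append ![y] ![z]))).det =
      ⟪x, x⟫ * (⟪y, y⟫ * ⟪z, z⟫ - ⟪y, z⟫ ^ 2) - ⟪x, y⟫ ^ 2 * ⟪z, z⟫ := by
  have h : Fin.append ![x] (Fin.append ![y] ![z]) = ![x, y, z] := by
    funext i; fin_cases i <;> rfl
  rw [h, gramM, Matrix.det_fin_three]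
  simp only [Matrix.of_apply, Matrix.cons_val, real_inner_comm x z, hxz,
    real_inner_comm y x, real_inner_comm z y]
  ring

theorem gMI_self_add_of_orthogonal (x w u : V) (hxw : ⟪x, w⟫ = 0) (hxu : ⟪x, u⟫ = 0)
    (hu : ⟪u, u⟫ ≠ 0) :
    gMI ![x] ![x + w] ![u] = 1 / 2 * Real.logb 2 (1 + ⟪x, x⟫ / residualVar w u) := by
  have hx_xw : ⟪x, x + w⟫ = ⟪x, x⟫ := by rw [inner_add_right, hxw, add_zero]
  have hxw_xw : ⟪x + w, x + w⟫ = ⟪x, x⟫ + ⟪w, w⟫ := by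
    rw [inner_add_left, hx_xw, inner_add_right, real_inner_comm x w, hxw, zero_add]
  have hxw_u : ⟪x + w, u⟫ = ⟪w, u⟫ := by rw [inner_add_left, hxu, zero_add]
  rw [gMI, det_gramM_append_single, det_gramM_append_single,
    det_gramM_append_append_single _ _ _ hxu, det_gramM_single, hx_xw, hxw_xw, hxw_u, hxu,
    residualVar]
  set a := ⟪x, x⟫
  set n := ⟪u, u⟫
  set b := ⟪w, u⟫
  set c := ⟪w, w⟫
  rw [show a * ((a + c) * n - b ^ 2) - a ^ 2 * n = a * (c * n - b ^ 2) by ring]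
  -- If `a = 0` or `c * n = b ^ 2`, division by zero turns the two arguments into `0` and `1`,
  -- and `logb 2 0 = logb 2 1 = 0`.
  rcases eq_or_ne a 0 with ha | ha
  · simp [ha]
  rcases eq_or_ne (c * n - b ^ 2) 0 with hr | hr
  · have hr' : c - b ^ 2 / n = 0 := by field_simp; linear_combination hr
    simp [hr, hr']
  congr 2
  rw [show c - b ^ 2 / n = (c * n - b ^ 2) / n by field_simp, div_div_eq_mul_div,
    one_add_div hr, div_eq_div_iff (by simp [ha, hr, hu]) hr]
  ring

theorem inner_sub_proj_self_right (x s : V) (hs : ⟪s, s⟫ ≠ 0) :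
    ⟪x - (⟪x, s⟫ / ⟪s, s⟫) • s, s⟫ = 0 := by
  rw [inner_sub_left, real_inner_smul_left, div_mul_cancel₀ _ hs, sub_self]

theorem inner_self_sub_proj (x s : V) (hs : ⟪s, s⟫ ≠ 0) :
    ⟪x - (⟪x, s⟫ / ⟪s, s⟫) • s, x - (⟪x, s⟫ / ⟪s, s⟫) • s⟫ = residualVar x s := by
  rw [inner_sub_right, real_inner_smul_right, inner_sub_proj_self_right x s hs,
    inner_sub_left, real_inner_smul_left, real_inner_comm x s, residualVar]
  ring

theorem residualVar_of_inner_eq_mul_sqrt (x s : V) {P Q ρ : ℝ} (hP : 0 ≤ P) (hQ : 0 < Q)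
    (hx : ⟪x, x⟫ = P) (hs : ⟪s, s⟫ = Q) (hxs : ⟪x, s⟫ = ρ * Real.sqrt (P * Q)) :
    residualVar x s = P * (1 - ρ ^ 2) := by
  rw [residualVar, hx, hs, hxs, mul_pow, Real.sq_sqrt (mul_nonneg hP hQ.le)]
  field_simp

theorem proj_coeff_of_inner_eq_mul_sqrt (x s : V) {P Q ρ : ℝ} (hP : 0 ≤ P) (hQ : 0 < Q)
    (hs : ⟪s, s⟫ = Q) (hxs : ⟪x, s⟫ = ρ * Real.sqrt (P * Q)) :
    ⟪x, s⟫ / ⟪s, s⟫ = ρ * Real.sqrt (P / Q) := by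
  rw [hxs, hs, Real.sqrt_mul hP, Real.sqrt_div hP]
  field_simp
  rw [Real.sq_sqrt hQ.le]

theorem one_add_mul_sqrt_div_sq_mul {P Q : ℝ} (ρ : ℝ) (hP : 0 ≤ P) (hQ : 0 < Q) :
    (1 + ρ * Real.sqrt (P / Q)) ^ 2 * Q = (Real.sqrt Q + ρ * Real.sqrt P) ^ 2 := by
  rw [Real.sqrt_div hP]
  field_simp
  rw [Real.sq_sqrt hQ.le, mul_comm]

theorem inner_self_add_smul_of_orthogonal (e S : V) (α : ℝ) (heS : ⟪e, S⟫ = 0) :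
    ⟪e + α • S, e + α • S⟫ = ⟪e, e⟫ + α ^ 2 * ⟪S, S⟫ := by
  simp only [inner_add_left, inner_add_right, real_inner_smul_left, real_inner_smul_right,
    heS, real_inner_comm e S]
  ring

theorem residualVar_dirtyPaper (e S z : V) (α : ℝ) (heS : ⟪e, S⟫ = 0) (hez : ⟪e, z⟫ = 0)
    (hSz : ⟪S, z⟫ = 0) (hu : ⟪e, e⟫ + α ^ 2 * ⟪S, S⟫ ≠ 0) :
    residualVar (e + S + z) (e + α • S) =
      ⟪z, z⟫ + ⟪e, e⟫ * ⟪S, S⟫ * (1 - α) ^ 2 / (⟪e, e⟫ + α ^ 2 * ⟪S, S⟫) := by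
  rw [residualVar, inner_self_add_smul_of_orthogonal e S α heS]
  simp only [inner_add_left, inner_add_right, real_inner_smul_right,
    heS, hez, hSz, real_inner_comm e S, real_inner_comm e z, real_inner_comm S z]
  have key : (⟪e, e⟫ + ⟪S, S⟫) * (⟪e, e⟫ + α ^ 2 * ⟪S, S⟫) - (⟪e, e⟫ + α * ⟪S, S⟫) ^ 2 =
      ⟪e, e⟫ * ⟪S, S⟫ * (1 - α) ^ 2 := by ring
  rw [← key, sub_div, mul_div_cancel_right₀ _ hu]
  ring

end GaussianInnerProduct

theorem stmt15_general {V : Type*} [NormedAddCommGroup V] [InnerProductSpace ℝ V]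
    (P1 P2 Q N3 γ θ ρ2s α' P2' Q' : ℝ)
    (hP2 : 0 < P2) (hQ : 0 < Q)
    (hθ : θ ∈ Set.Icc (0:ℝ) 1)
    (hP2' : P2' = θ * P2 * (1 - ρ2s ^ 2))
    (hQ' : Q' = (Real.sqrt Q + ρ2s * Real.sqrt (θ * P2)) ^ 2)
    (hpos : 0 < P2' + α' ^ 2 * Q')
    (xt1 xt2 s z3 u2 yt3 : V)
    (hxt1 : ⟪xt1, xt1⟫ = γ * P1) (hxt2 : ⟪xt2, xt2⟫ = θ * P2) (hs : ⟪s, s⟫ = Q)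
    (hz3 : ⟪z3, z3⟫ = N3)
    (hxt2s : ⟪xt2, s⟫ = ρ2s * Real.sqrt (θ * P2 * Q))
    (hxt1xt2 : ⟪xt1, xt2⟫ = 0) (hxt1s : ⟪xt1, s⟫ = 0) (hxt1z3 : ⟪xt1, z3⟫ = 0)
    (hz3xt2 : ⟪z3, xt2⟫ = 0) (hz3s : ⟪z3, s⟫ = 0)
    (hu2 : u2 = xt2 + (α' * (1 + ρ2s * Real.sqrt (θ * P2 / Q)) -
      ρ2s * Real.sqrt (θ * P2 / Q)) • s)
    (hyt3 : yt3 = xt2 + s + z3) :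
    gMI ![xt1] ![xt1 + yt3] ![u2] =
      (1/2) * Real.logb 2
        (1 + γ * P1 / (N3 + P2' * Q' * (1 - α') ^ 2 / (P2' + α' ^ 2 * Q'))) := by
  have hθP2 : 0 ≤ θ * P2 := mul_nonneg hθ.1 hP2.le
  have hs0 : ⟪s, s⟫ ≠ 0 := hs ▸ hQ.ne'
  set c := ρ2s * Real.sqrt (θ * P2 / Q)
  have hc : ⟪xt2, s⟫ / ⟪s, s⟫ = c := proj_coeff_of_inner_eq_mul_sqrt xt2 s hθP2 hQ hs hxt2s
  set e := xt2 - c • s with he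
  set S' := (1 + c) • s with hS'
  have hee : ⟪e, e⟫ = P2' := by
    rw [he, ← hc, inner_self_sub_proj _ _ hs0, hP2',
      residualVar_of_inner_eq_mul_sqrt _ _ hθP2 hQ hxt2 hs hxt2s]
  have hSS : ⟪S', S'⟫ = Q' := by
    rw [hS', real_inner_smul_left, real_inner_smul_right, hs, hQ',
      ← one_add_mul_sqrt_div_sq_mul ρ2s hθP2 hQ]
    ring
  have heS : ⟪e, S'⟫ = 0 := by
    rw [hS', real_inner_smul_right, he, ← hc, inner_sub_proj_self_right _ _ hs0, mul_zero]
  have hez : ⟪e, z3⟫ = 0 := by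
    rw [he, inner_sub_left, real_inner_smul_left, real_inner_comm, hz3xt2, real_inner_comm,
      hz3s, mul_zero, sub_zero]
  have hSz : ⟪S', z3⟫ = 0 := by rw [real_inner_smul_left, real_inner_comm, hz3s, mul_zero]
  have hu : u2 = e + α' • S' := by rw [hu2]; module
  have hy : yt3 = e + S' + z3 := by rw [hyt3]; module
  have hxt1y : ⟪xt1, yt3⟫ = 0 := by
    simp only [hyt3, inner_add_right, hxt1xt2, hxt1s, hxt1z3, add_zero]
  have hxt1u : ⟪xt1, u2⟫ = 0 := by
    simp only [hu2, inner_add_right, real_inner_smul_right, hxt1xt2, hxt1s, mul_zero, add_zero]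
  have huu : ⟪u2, u2⟫ = P2' + α' ^ 2 * Q' := by
    rw [hu, inner_self_add_smul_of_orthogonal _ _ _ heS, hee, hSS]
  rw [gMI_self_add_of_orthogonal _ _ _ hxt1y hxt1u (huu ▸ hpos.ne'), hu, hy,
    residualVar_dirtyPaper _ _ _ _ heS hez hSz (hee ▸ hSS ▸ hpos.ne'), hxt1, hee, hSS, hz3]

/-- `I(X̃₁; X̃₁ + Ỹ₃ | U₂) = ½ log₂(1 + γP₁/(N₃ + Φ))` with
`Φ = P₂'Q'(1-α')²/(P₂' + α'²Q')`, for the generalized dirty-paper coding auxiliary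
`U₂ = X̃₂ + [α'(1+ρ'₂ₛ√(θP₂/Q)) - ρ'₂ₛ√(θP₂/Q)]S` and `Ỹ₃ = X̃₂ + S + Z₃`. -/
theorem stmt15 {V : Type*} [NormedAddCommGroup V] [InnerProductSpace ℝ V]
    (P1 P2 Q N3 γ θ ρ2s α' P2' Q' : ℝ)
    (hP1 : 0 < P1) (hP2 : 0 < P2) (hQ : 0 < Q) (hN3 : 0 < N3)
    (hγ : γ ∈ Set.Icc (0:ℝ) 1) (hθ : θ ∈ Set.Icc (0:ℝ) 1) (hρ2s : ρ2s ∈ Set.Icc (-1:ℝ) 0)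
    (hP2' : P2' = θ * P2 * (1 - ρ2s ^ 2))
    (hQ' : Q' = (Real.sqrt Q + ρ2s * Real.sqrt (θ * P2)) ^ 2)
    (hpos : 0 < P2' + α' ^ 2 * Q')
    (xt1 xt2 s z3 u2 yt3 : V)
    (hxt1 : ⟪xt1, xt1⟫ = γ * P1) (hxt2 : ⟪xt2, xt2⟫ = θ * P2) (hs : ⟪s, s⟫ = Q)
    (hz3 : ⟪z3, z3⟫ = N3)
    (hxt2s : ⟪xt2, s⟫ = ρ2s * Real.sqrt (θ * P2 * Q))
    (hxt1xt2 : ⟪xt1, xt2⟫ = 0) (hxt1s : ⟪xt1, s⟫ = 0) (hxt1z3 : ⟪xt1, z3⟫ = 0)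
    (hz3xt2 : ⟪z3, xt2⟫ = 0) (hz3s : ⟪z3, s⟫ = 0)
    (hu2 : u2 = xt2 + (α' * (1 + ρ2s * Real.sqrt (θ * P2 / Q)) -
      ρ2s * Real.sqrt (θ * P2 / Q)) • s)
    (hyt3 : yt3 = xt2 + s + z3) :
    gMI ![xt1] ![xt1 + yt3] ![u2] =
      (1/2) * Real.logb 2
        (1 + γ * P1 / (N3 + P2' * Q' * (1 - α') ^ 2 / (P2' + α' ^ 2 * Q'))) :=
  stmt15_general P1 P2 Q N3 γ θ ρ2s α' P2' Q' hP2 hQ hθ hP2' hQ' hpos xt1 xt2 s z3 u2 yt3 hxt1 hxt2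
    hs hz3 hxt2s hxt1xt2 hxt1s hxt1z3 hz3xt2 hz3s hu2 hyt3
end
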